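/- Let r ≥ 0 and let ψ(η₁,η₂) = (a(r) + b(r)η₁ + b(r)η₂ + c(r)η₁η₂)(4 + r − 2η₁ − 2η₂) on the region D = ([−1,1] × [−1,0]) ∪ ([−1,0] × [0,1]). Then for every (η₁,η₂) ∈ D, ψ(η₁,η₂) ≥ ψ(1,0) = (a(r) + b(r))(2 + r); i.e. the minimum of ψ over D is attained at (1,0). -/
import Mathlib

noncomputable def vankaA (r : ℝ) : ℝ := (r^2 + 8*r + 14) / ((2+r)*(4+r)*(6+r))
noncomputable def vankaB (r : ℝ) : ℝ := 1 / ((2+r)*(6+r))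
noncomputable def vankaC (r : ℝ) : ℝ := 2 / ((2+r)*(4+r)*(6+r))

noncomputable def psi (r η₁ η₂ : ℝ) : ℝ :=
  (vankaA r + vankaB r * η₁ + vankaB r * η₂ + vankaC r * η₁ * η₂) * (4 + r - 2*η₁ - 2*η₂)

def regionD : Set (ℝ × ℝ) :=
  (Set.Icc (-1 : ℝ) 1 ×ˢ Set.Icc (-1 : ℝ) 0) ∪ (Set.Icc (-1 : ℝ) 0 ×ˢ Set.Icc (0 : ℝ) 1)

lemma key1 (r x y : ℝ) (hr : 0 ≤ r) (hx1 : -1 ≤ x) (hx2 : x ≤ 1)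
    (hy1 : -1 ≤ y) (hy2 : y ≤ 0) :
    (r+3)*(r+6)*(r+2) ≤ (r^2+8*r+14 + (4+r)*x + (4+r)*y + 2*x*y)*(4+r-2*x-2*y) := by
  nlinarith [mul_nonneg (sub_nonneg.2 hx2) (sub_nonneg.2 (neg_nonneg.2 hy2)),
    mul_nonneg (sub_nonneg.2 hx2) (sub_nonneg.2 hx1 : (0:ℝ) ≤ x - (-1)),
    mul_nonneg (sub_nonneg.2 (neg_nonneg.2 hy2)) (sub_nonneg.2 hy1 : (0:ℝ) ≤ y - (-1)),
    mul_nonneg (mul_nonneg (sub_nonneg.2 hx2) (sub_nonneg.2 (neg_nonneg.2 hy2))) hr,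
    mul_nonneg (mul_nonneg (sub_nonneg.2 hx2) (sub_nonneg.2 hx1 : (0:ℝ) ≤ x - (-1))) hr,
    mul_nonneg (mul_nonneg (sub_nonneg.2 (neg_nonneg.2 hy2)) (sub_nonneg.2 hy1 : (0:ℝ) ≤ y - (-1))) hr,
    sq_nonneg (x+y), sq_nonneg (x-y), sq_nonneg (x+y-1), mul_nonneg hr hr]

lemma key2 (r x y : ℝ) (hr : 0 ≤ r) (hx1 : -1 ≤ x) (hx2 : x ≤ 0)
    (hy1 : 0 ≤ y) (hy2 : y ≤ 1) :
    (r+3)*(r+6)*(r+2) ≤ (r^2+8*r+14 + (4+r)*x + (4+r)*y + 2*x*y)*(4+r-2*x-2*y) := by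
  nlinarith [mul_nonneg (sub_nonneg.2 hy2) (sub_nonneg.2 (neg_nonneg.2 hx2)),
    mul_nonneg (sub_nonneg.2 hy2) (sub_nonneg.2 hy1),
    mul_nonneg (sub_nonneg.2 (neg_nonneg.2 hx2)) (sub_nonneg.2 hx1 : (0:ℝ) ≤ x - (-1)),
    mul_nonneg (mul_nonneg (sub_nonneg.2 hy2) (sub_nonneg.2 (neg_nonneg.2 hx2))) hr,
    mul_nonneg (mul_nonneg (sub_nonneg.2 hy2) (sub_nonneg.2 hy1)) hr,
    mul_nonneg (mul_nonneg (sub_nonneg.2 (neg_nonneg.2 hx2)) (sub_nonneg.2 hx1 : (0:ℝ) ≤ x - (-1))) hr,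
    sq_nonneg (x+y), sq_nonneg (x-y), sq_nonneg (x+y-1), mul_nonneg hr hr]

lemma psi_eq (r x y : ℝ) (hr : 0 ≤ r) :
    psi r x y = ((r^2+8*r+14 + (4+r)*x + (4+r)*y + 2*x*y)*(4+r-2*x-2*y)) /
      ((2+r)*(4+r)*(6+r)) := by
  have h2 : (2+r) ≠ 0 := by positivity
  have h4 : (4+r) ≠ 0 := by positivity
  have h6 : (6+r) ≠ 0 := by positivity
  unfold psi vankaA vankaB vankaC
  field_simp

theorem psi_min_on_D (r : ℝ) (hr : 0 ≤ r) :
    (∀ η : ℝ × ℝ, η ∈ regionD → psi r 1 0 ≤ psi r η.1 η.2) ∧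
    psi r 1 0 = (vankaA r + vankaB r) * (2 + r) := by
  have hd : (0:ℝ) < (2+r)*(4+r)*(6+r) := by positivity
  constructor
  · rintro ⟨x, y⟩ h
    rw [psi_eq r x y hr, psi_eq r 1 0 hr]
    have hP : (r+3)*(r+6)*(r+2) ≤ (r^2+8*r+14 + (4+r)*x + (4+r)*y + 2*x*y)*(4+r-2*x-2*y) := by
      rcases h with ⟨⟨hx1, hx2⟩, ⟨hy1, hy2⟩⟩ | ⟨⟨hx1, hx2⟩, ⟨hy1, hy2⟩⟩
      · exact key1 r x y hr hx1 hx2 hy1 hy2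
      · exact key2 r x y hr hx1 hx2 hy1 hy2
    have hN : (r^2+8*r+14 + (4+r)*1 + (4+r)*0 + 2*1*0)*(4+r-2*1-2*0) = (r+3)*(r+6)*(r+2) := by ring
    rw [hN]
    exact div_le_div_of_nonneg_right hP hd.le
  · unfold psi vankaA vankaB vankaC
    ring
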